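/- The language L = {a^n b^n : n ≥ 1} ∪ {b^n a^n : n ≥ 1} cannot be generated by any external contextual grammar all of whose selection languages are closed under circular shift. -/

import Mathlib

/-- An external contextual grammar: a finite list of selection pairs
(selection language, finite list of contexts) and a finite list of axioms. -/
structure ECG (α : Type*) where
  pairs : List (Set (List α) × List (List α × List α))
  axioms : List (List α)

/-- Every context `(u, v)` satisfies `uv ≠ ε`. -/
def ECG.WellFormed {α : Type*} (G : ECG α) : Prop :=
  ∀ p ∈ G.pairs, ∀ c ∈ p.2, c.1 ++ c.2 ≠ []

/-- External derivation step: `x ⟹ u x v` for a context `(u,v)` of a pair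
whose selection language contains `x`. -/
def ECG.Step {α : Type*} (G : ECG α) (x y : List α) : Prop :=
  ∃ p ∈ G.pairs, x ∈ p.1 ∧ ∃ c ∈ p.2, y = c.1 ++ x ++ c.2

/-- The language generated externally: all words derivable from the axioms. -/
def ECG.lang {α : Type*} (G : ECG α) : Set (List α) :=
  { w | ∃ x ∈ G.axioms, Relation.ReflTransGen G.Step x w }

def Circular {α : Type*} (L : Set (List α)) : Prop :=
  ∀ x y : List α, x ++ y ∈ L → y ++ x ∈ L

/-! A word `w` of `L` longer than every axiom is derived in a last step `w = u (s t) v` from a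
selected word `s t ∈ L` with `s = x^m`, `t = y^m`. Circularity selects `t s`, which lies in `L`
as well, so `u (t s) v ∈ L`. A word of `L` is determined by its length and its first letter,
and also by its length and its last letter; since `uv ≠ ε`, the words `u (s t) v` and `u (t s) v`
share one of these, which would force `s t = t s`. -/

namespace ECG

variable {α : Type*} {G : ECG α} {x y : List α}

lemma mem_lang_of_step (hx : x ∈ G.lang) (h : G.Step x y) : y ∈ G.lang :=
  let ⟨w, hw, hwx⟩ := hx
  ⟨w, hw, hwx.tail h⟩

lemma exists_step_of_mem_lang (hy : y ∈ G.lang) (hA : y ∉ G.axioms) :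
    ∃ x ∈ G.lang, G.Step x y := by
  obtain ⟨w, hw, hwy⟩ := hy
  rcases hwy.cases_tail with rfl | ⟨x, hwx, hxy⟩
  · exact absurd hw hA
  · exact ⟨x, ⟨w, hw, hwx⟩, hxy⟩

end ECG

section BalancedBlocks

variable {α : Type*}

def balancedBlocks (a b : α) : Set (List α) :=
  { w | ∃ n ≥ 1, w = List.replicate n a ++ List.replicate n b }

def twoBlockLang (a b : α) : Set (List α) :=
  balancedBlocks a b ∪ balancedBlocks b a

lemma infinite_balancedBlocks (a b : α) : (balancedBlocks a b).Infinite :=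
  Set.infinite_of_injective_forall_mem
    (f := fun n => List.replicate (n + 1) a ++ List.replicate (n + 1) b)
    (fun m n h => by have := congrArg List.length h; simp at this; omega)
    (fun n => ⟨n + 1, by omega, rfl⟩)

variable {a b : α} {w w' : List α}

lemma head?_of_mem_balancedBlocks (hw : w ∈ balancedBlocks a b) : w.head? = some a := by
  obtain ⟨n, hn, rfl⟩ := hw
  obtain ⟨n, rfl⟩ := Nat.exists_eq_add_of_le' hn
  simp [List.replicate_succ]

lemma getLast?_of_mem_balancedBlocks (hw : w ∈ balancedBlocks a b) : w.getLast? = some b := by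
  obtain ⟨n, hn, rfl⟩ := hw
  rw [List.getLast?_append_of_ne_nil _ (by simp; omega), List.getLast?_replicate,
    if_neg (by omega)]

lemma eq_of_mem_balancedBlocks_of_length_eq (hw : w ∈ balancedBlocks a b)
    (hw' : w' ∈ balancedBlocks a b) (h : w.length = w'.length) : w = w' := by
  obtain ⟨n, -, rfl⟩ := hw
  obtain ⟨n', -, rfl⟩ := hw'
  obtain rfl : n = n' := by simp at h; omega
  rfl

lemma exists_swap_mem_balancedBlocks (hw : w ∈ balancedBlocks a b) :
    ∃ s t, w = s ++ t ∧ t ++ s ∈ balancedBlocks b a := by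
  obtain ⟨n, hn, rfl⟩ := hw
  exact ⟨_, _, rfl, n, hn, rfl⟩

lemma ne_of_mem_balancedBlocks (hab : a ≠ b) (hw : w ∈ balancedBlocks a b)
    (hw' : w' ∈ balancedBlocks b a) : w ≠ w' := by
  rintro rfl
  have := (head?_of_mem_balancedBlocks hw).symm.trans (head?_of_mem_balancedBlocks hw')
  exact hab (Option.some_injective _ this)

lemma exists_swap_mem_twoBlockLang (hab : a ≠ b) (hw : w ∈ twoBlockLang a b) :
    ∃ s t, w = s ++ t ∧ t ++ s ∈ twoBlockLang a b ∧ s ++ t ≠ t ++ s := by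
  rcases hw with hw | hw
  · obtain ⟨s, t, rfl, hts⟩ := exists_swap_mem_balancedBlocks hw
    exact ⟨s, t, rfl, Or.inr hts, ne_of_mem_balancedBlocks hab hw hts⟩
  · obtain ⟨s, t, rfl, hts⟩ := exists_swap_mem_balancedBlocks hw
    exact ⟨s, t, rfl, Or.inl hts, ne_of_mem_balancedBlocks hab.symm hw hts⟩

lemma eq_of_mem_twoBlockLang_of_head?_eq (hab : a ≠ b) (hw : w ∈ twoBlockLang a b)
    (hw' : w' ∈ twoBlockLang a b) (hlen : w.length = w'.length)
    (hhead : w.head? = w'.head?) : w = w' := by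
  rcases hw with hw | hw <;> rcases hw' with hw' | hw'
  all_goals first
    | exact eq_of_mem_balancedBlocks_of_length_eq hw hw' hlen
    | rw [head?_of_mem_balancedBlocks hw, head?_of_mem_balancedBlocks hw'] at hhead
      simp [hab, hab.symm] at hhead

lemma eq_of_mem_twoBlockLang_of_getLast?_eq (hab : a ≠ b) (hw : w ∈ twoBlockLang a b)
    (hw' : w' ∈ twoBlockLang a b) (hlen : w.length = w'.length)
    (hlast : w.getLast? = w'.getLast?) : w = w' := by
  rcases hw with hw | hw <;> rcases hw' with hw' | hw'
  all_goals first
    | exact eq_of_mem_balancedBlocks_of_length_eq hw hw' hlen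
    | rw [getLast?_of_mem_balancedBlocks hw, getLast?_of_mem_balancedBlocks hw'] at hlast
      simp [hab, hab.symm] at hlast

lemma notMem_twoBlockLang_of_swap (hab : a ≠ b) {u v s t : List α} (huv : u ++ v ≠ [])
    (hst : s ++ t ≠ t ++ s) (h : u ++ (s ++ t) ++ v ∈ twoBlockLang a b) :
    u ++ (t ++ s) ++ v ∉ twoBlockLang a b := by
  intro h'
  have hlen : (u ++ (s ++ t) ++ v).length = (u ++ (t ++ s) ++ v).length := by
    simp only [List.length_append]; omega
  refine hst ?_
  suffices u ++ (s ++ t) ++ v = u ++ (t ++ s) ++ v from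
    List.append_cancel_left (List.append_cancel_right this)
  by_cases hu : u = []
  · subst hu
    have hv : v ≠ [] := by simpa using huv
    apply eq_of_mem_twoBlockLang_of_getLast?_eq hab h h' hlen
    rw [List.getLast?_append_of_ne_nil _ hv, List.getLast?_append_of_ne_nil _ hv]
  · apply eq_of_mem_twoBlockLang_of_head?_eq hab h h' hlen
    rw [List.append_assoc, List.head?_append_of_ne_nil _ hu, List.append_assoc,
      List.head?_append_of_ne_nil _ hu]

end BalancedBlocks

theorem stmt_16 {α : Type*} (a b : α) (hab : a ≠ b) :
    ¬ ∃ G : ECG α, G.WellFormed ∧ (∀ p ∈ G.pairs, Circular p.1) ∧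
      G.lang = { w | ∃ n ≥ 1, w = List.replicate n a ++ List.replicate n b } ∪
               { w | ∃ n ≥ 1, w = List.replicate n b ++ List.replicate n a } := by
  rintro ⟨G, hWF, hCirc, hL⟩
  change G.lang = twoBlockLang a b at hL
  obtain ⟨w, hw, hwA⟩ :=
    (infinite_balancedBlocks a b).exists_notMem_finite G.axioms.finite_toSet
  have hwL : w ∈ G.lang := hL ▸ Or.inl hw
  obtain ⟨y, hyL, p, hp, hyp, c, hc, rfl⟩ := G.exists_step_of_mem_lang hwL hwA
  obtain ⟨s, t, rfl, htsL, hst⟩ := exists_swap_mem_twoBlockLang hab (hL ▸ hyL)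
  have hswap : c.1 ++ (t ++ s) ++ c.2 ∈ G.lang :=
    G.mem_lang_of_step (hL ▸ htsL) ⟨p, hp, hCirc p hp s t hyp, c, hc, rfl⟩
  exact notMem_twoBlockLang_of_swap hab (hWF p hp c hc) hst (Or.inl hw) (hL ▸ hswap)
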